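/- Let C be an additive code of length n over GF(4) with coordinates indexed 0, …, n−1, and let A ⊆ {1, …, n−1}. Then the following are equivalent: (i) every two codewords t, t' ∈ C with tᵢ = t'ᵢ for all i ∈ A satisfy t₀ = t'₀ (the shares in A determine the secret); (ii) there exist x, y ∈ C^⊥ with supp(x) ⊆ {0} ∪ A, supp(y) ⊆ {0} ∪ A, and x₀, y₀ distinct nonzero elements of GF(4). In particular, a single dual codeword with nonzero first coordinate is not enough: two dual codewords with distinct nonzero first coordinates are needed, so the scheme is a 2-step secret sharing scheme. -/

import Mathlib

/-- `GF(4)`, the field with 4 elements. -/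
abbrev F4 := GaloisField 2 2

/-- The trace map `Tr : GF(4) → GF(2)`, `Tr(x) = x + x²` (valued in the prime subfield). -/
noncomputable def tr (x : F4) : F4 := x + x ^ 2

/-- The conjugate `ȳ = y²` of an element of `GF(4)`. -/
noncomputable def conj (x : F4) : F4 := x ^ 2

/-- The trace dual of a code: all vectors whose trace inner product with every
codeword is zero. -/
def traceDual {n : ℕ} (C : Set (Fin n → F4)) : Set (Fin n → F4) :=
  {x | ∀ c ∈ C, ∑ i, tr (x i * conj (c i)) = 0}

/-! In GF(4) one has `Tr(a w̄) = a w (w + a)`, so a dual word supported in `{0} ∪ A` with first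
coordinate `a ≠ 0` only confines the difference `w` of two secrets with equal shares to `{0, a}`;
two such words with distinct first coordinates force `w = 0`.
Conversely, if the shares determine the secret, then for each `a` the GF(2)-linear functional
`t ↦ Tr(a t̄₀)` on `C` vanishes whenever the shares do, hence factors through restriction to `A`.
Representing the factor through the nondegenerate trace pairing and adding `a` at coordinate `0`
gives a dual word supported in `{0} ∪ A` with first coordinate `a`. -/

open Finset

theorem LinearMap.exists_comp_eq_of_ker_le {K V W U : Type*} [Field K] [AddCommGroup V]
    [Module K V] [AddCommGroup W] [Module K W] [AddCommGroup U] [Module K U]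
    (f : V →ₗ[K] W) (g : V →ₗ[K] U) (hfg : ker f ≤ ker g) : ∃ h : W →ₗ[K] U, h ∘ₗ f = g := by
  obtain ⟨h, hh⟩ :=
    exists_extend ((ker f).liftQ g hfg ∘ₗ f.quotKerEquivRange.symm.toLinearMap)
  refine ⟨h, ext fun v => ?_⟩
  simpa [quotKerEquivRange_symm_apply_image] using
    LinearMap.congr_fun hh ⟨f v, mem_range_self f v⟩

@[simps]
noncomputable def Set.indicatorLinearMap {ι : Type*} (R : Type*) {M : Type*} [Semiring R]
    [AddCommMonoid M] [Module R M] (A : Set ι) : (ι → M) →ₗ[R] ι → M where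
  toFun := A.indicator
  map_add' := Set.indicator_add' A
  map_smul' := Set.indicator_const_smul A

theorem F4.card : Nat.card F4 = 4 := by
  rw [GaloisField.card 2 2 two_ne_zero]
  norm_num

theorem F4.pow_four (x : F4) : x ^ 4 = x := by
  have := Fintype.ofFinite F4
  rw [← F4.card, ← Fintype.card_eq_nat_card, FiniteField.pow_card]

theorem F4.exists_ne_zero_ne_one : ∃ b : F4, b ≠ 0 ∧ b ≠ 1 := by
  classical
  have := Fintype.ofFinite F4
  have hcard : ({0, 1} : Finset F4).card < (univ : Finset F4).card := by
    rw [card_univ, Fintype.card_eq_nat_card, F4.card]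
    exact card_le_two.trans_lt (by norm_num)
  obtain ⟨b, -, hb⟩ := exists_mem_notMem_of_card_lt_card hcard
  exact ⟨b, by simpa [not_or] using hb⟩

@[simp]
theorem conj_zero : conj 0 = 0 := zero_pow two_ne_zero

noncomputable def conjLinear : F4 →ₗ[ZMod 2] F4 :=
  (frobenius F4 2).toAddMonoidHom.toZModLinearMap 2

theorem conjLinear_apply (z : F4) : conjLinear z = conj z :=
  frobenius_def 2 z

theorem tr_sq (x : F4) : tr (x ^ 2) = tr x := by
  rw [tr, tr, ← pow_mul, F4.pow_four, add_comm]

theorem tr_mul_conj (a w : F4) : tr (a * conj w) = a * w * (w + a) := by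
  rw [tr, conj, mul_pow, ← pow_mul, F4.pow_four]
  ring

theorem eq_zero_of_tr_mul_conj_eq_zero {a b w : F4} (ha : a ≠ 0) (hb : b ≠ 0) (hab : a ≠ b)
    (hwa : tr (a * conj w) = 0) (hwb : tr (b * conj w) = 0) : w = 0 := by
  rw [tr_mul_conj] at hwa hwb
  simp only [mul_eq_zero, ha, hb, false_or, CharTwo.add_eq_zero] at hwa hwb
  rcases hwa with h | rfl
  · exact h
  · exact hwb.resolve_right hab

theorem tr_mul_conj_eq_zero_of_mem_traceDual {n : ℕ} {C : Set (Fin n → F4)} {A : Set (Fin n)}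
    {j : Fin n} {x s : Fin n → F4} (hx : x ∈ traceDual C) (hxA : {i | x i ≠ 0} ⊆ insert j A)
    (hs : s ∈ C) (hsA : ∀ i ∈ A, s i = 0) : tr (x j * conj (s j)) = 0 := by
  rw [← hx s hs, eq_comm]
  refine sum_eq_single j (fun i _ hij => ?_) (by simp)
  obtain hxi | hxi := eq_or_ne (x i) 0
  · simp [hxi, tr]
  · simp [hsA i ((hxA hxi).resolve_left hij), tr]

theorem algebraMap_trace_eq_tr (x : F4) :
    algebraMap (ZMod 2) F4 (Algebra.trace (ZMod 2) F4 x) = tr x := by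
  rw [FiniteField.algebraMap_trace_eq_sum_pow, GaloisField.finrank 2 two_ne_zero, Nat.card_zmod]
  simp [sum_range_succ, tr]

theorem trace_sq (x : F4) : Algebra.trace (ZMod 2) F4 (x ^ 2) = Algebra.trace (ZMod 2) F4 x :=
  (algebraMap (ZMod 2) F4).injective (by rw [algebraMap_trace_eq_tr, algebraMap_trace_eq_tr, tr_sq])

theorem exists_trace_mul_conj_eq (φ : F4 →ₗ[ZMod 2] ZMod 2) :
    ∃ y : F4, ∀ z, Algebra.trace (ZMod 2) F4 (y * conj z) = φ z := by
  let B := Algebra.traceForm (ZMod 2) F4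
  have hB := traceForm_nondegenerate (ZMod 2) F4
  -- `Tr((u z)²) = Tr(u z)`, so the square of the trace-form representative `u` of `φ` works
  refine ⟨((B.toDual hB).symm φ) ^ 2, fun z => ?_⟩
  rw [conj, ← mul_pow, trace_sq, ← Algebra.traceForm_apply,
    LinearMap.BilinForm.apply_toDual_symm_apply]

section TracePairing

variable {ι : Type*} [Fintype ι]

noncomputable def tracePairing (x : ι → F4) : (ι → F4) →ₗ[ZMod 2] ZMod 2 :=
  ∑ i, Algebra.trace (ZMod 2) F4 ∘ₗ LinearMap.mulLeft (ZMod 2) (x i) ∘ₗ conjLinear ∘ₗ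
    LinearMap.proj i

theorem tracePairing_apply (x v : ι → F4) :
    tracePairing x v = ∑ i, Algebra.trace (ZMod 2) F4 (x i * conj (v i)) := by
  simp [tracePairing, conjLinear_apply]

theorem algebraMap_tracePairing (x v : ι → F4) :
    algebraMap (ZMod 2) F4 (tracePairing x v) = ∑ i, tr (x i * conj (v i)) := by
  simp [tracePairing_apply, algebraMap_trace_eq_tr]

theorem tracePairing_add_left (x y : ι → F4) :
    tracePairing (x + y) = tracePairing x + tracePairing y := by
  ext v
  simp [tracePairing_apply, add_mul, sum_add_distrib]

theorem tracePairing_indicator_left (A : Set ι) (x v : ι → F4) :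
    tracePairing (A.indicator x) v = tracePairing x (A.indicator v) := by
  simp only [tracePairing_apply]
  refine sum_congr rfl fun i _ => ?_
  by_cases hi : i ∈ A <;> simp [hi]

variable [DecidableEq ι]

theorem tracePairing_single_left (j : ι) (a : F4) (v : ι → F4) :
    tracePairing (Pi.single j a) v = Algebra.trace (ZMod 2) F4 (a * conj (v j)) := by
  rw [tracePairing_apply, sum_eq_single j] <;> simp +contextual

theorem tracePairing_single_right (x : ι → F4) (j : ι) (z : F4) :
    tracePairing x (Pi.single j z) = Algebra.trace (ZMod 2) F4 (x j * conj z) := by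
  rw [tracePairing_apply, sum_eq_single j] <;> simp +contextual

theorem exists_tracePairing_eq (φ : (ι → F4) →ₗ[ZMod 2] ZMod 2) : ∃ x, tracePairing x = φ := by
  choose x hx using fun i =>
    exists_trace_mul_conj_eq (φ ∘ₗ LinearMap.single (ZMod 2) (fun _ => F4) i)
  exact ⟨x, LinearMap.pi_ext fun i z => by rw [tracePairing_single_right, hx]; rfl⟩

theorem exists_tracePairing_eq_zero_of_determines_secret {C : AddSubgroup (ι → F4)} {A : Set ι}
    {j : ι} (hj : j ∉ A) (hsec : ∀ t ∈ C, (∀ i ∈ A, t i = 0) → t j = 0) (a : F4) :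
    ∃ x : ι → F4, (∀ c ∈ C, tracePairing x c = 0) ∧ {i | x i ≠ 0} ⊆ insert j A ∧ x j = a := by
  let C' := AddSubgroup.toZModSubmodule 2 C
  let ρ := A.indicatorLinearMap (ZMod 2) (M := F4)
  have hker : LinearMap.ker (ρ ∘ₗ C'.subtype) ≤
      LinearMap.ker (tracePairing (Pi.single j a) ∘ₗ C'.subtype) := by
    rintro ⟨t, ht⟩ hρt
    have htA : ∀ i ∈ A, t i = 0 := fun i hi => by
      simpa [ρ, Set.indicator_of_mem hi] using congr_fun hρt i
    simp [tracePairing_single_left, hsec t ht htA]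
  obtain ⟨h, hh⟩ := LinearMap.exists_comp_eq_of_ker_le _ _ hker
  obtain ⟨y, rfl⟩ := exists_tracePairing_eq h
  refine ⟨Pi.single j a + A.indicator y, fun c hc => ?_, fun i hi => ?_, ?_⟩
  · have hyc : tracePairing y (A.indicator c) = tracePairing (Pi.single j a) c :=
      LinearMap.congr_fun hh ⟨c, hc⟩
    rw [tracePairing_add_left, LinearMap.add_apply, tracePairing_indicator_left, hyc]
    exact CharTwo.add_self_eq_zero _
  · by_cases hij : i = j
    · exact .inl hij
    · simp only [Set.mem_ofPred_eq, Pi.add_apply, Pi.single_eq_of_ne hij, zero_add] at hi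
      exact .inr (Set.mem_of_indicator_ne_zero hi)
  · simp [Set.indicator_of_notMem hj]

end TracePairing

theorem mem_traceDual_iff {n : ℕ} {C : Set (Fin n → F4)} {x : Fin n → F4} :
    x ∈ traceDual C ↔ ∀ c ∈ C, tracePairing x c = 0 := by
  simp only [traceDual, Set.mem_ofPred_eq, ← algebraMap_tracePairing,
    FaithfulSMul.algebraMap_eq_zero_iff]

/-- The shares in `A` determine the secret coordinate `t 0` if and only if the trace dual
of `C` contains two codewords supported in `{0} ∪ A` whose coordinates at `0` are
distinct nonzero elements of `GF(4)` (a 2-step secret sharing scheme). -/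
theorem shares_determine_secret_iff_two_dual_words (n : ℕ)
    (C : AddSubgroup (Fin (n + 1) → F4))
    (A : Set (Fin (n + 1))) (hA : 0 ∉ A) :
    (∀ t ∈ C, ∀ t' ∈ C, (∀ i ∈ A, t i = t' i) → t 0 = t' 0) ↔
      (∃ x ∈ traceDual (C : Set (Fin (n + 1) → F4)),
        ∃ y ∈ traceDual (C : Set (Fin (n + 1) → F4)),
          {i | x i ≠ 0} ⊆ insert 0 A ∧ {i | y i ≠ 0} ⊆ insert 0 A ∧
          x 0 ≠ 0 ∧ y 0 ≠ 0 ∧ x 0 ≠ y 0) := by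
  constructor
  · intro hdet
    have hsec : ∀ t ∈ C, (∀ i ∈ A, t i = 0) → t 0 = 0 := fun t ht htA =>
      hdet t ht 0 C.zero_mem htA
    obtain ⟨b, hb0, hb1⟩ := F4.exists_ne_zero_ne_one
    obtain ⟨x, hx, hxA, hx0⟩ := exists_tracePairing_eq_zero_of_determines_secret hA hsec 1
    obtain ⟨y, hy, hyA, hy0⟩ := exists_tracePairing_eq_zero_of_determines_secret hA hsec b
    refine ⟨x, mem_traceDual_iff.2 hx, y, mem_traceDual_iff.2 hy, hxA, hyA, ?_, ?_, ?_⟩ <;>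
      simp [hx0, hy0, hb0, Ne.symm hb1]
  · rintro ⟨x, hx, y, hy, hxA, hyA, hx0, hy0, hxy⟩ t ht t' ht' htt'
    have hsA : ∀ i ∈ A, (t - t') i = 0 := fun i hi => sub_eq_zero.2 (htt' i hi)
    have hs := C.sub_mem ht ht'
    exact sub_eq_zero.1 <| eq_zero_of_tr_mul_conj_eq_zero hx0 hy0 hxy
      (tr_mul_conj_eq_zero_of_mem_traceDual hx hxA hs hsA)
      (tr_mul_conj_eq_zero_of_mem_traceDual hy hyA hs hsA)
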